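/- For every even m ≥ 2 and all (μ1, μ0) ∈ [0,1]², the rollout error probability of the empirical success rule satisfies the Hoeffding-type bound e(m, μ1, μ0) ≤ exp(−m(μ1 − μ0)²/4). -/
import Mathlib


open Finset

/-- Binomial pmf: probability that `Binomial(n, p)` equals `k`. -/
noncomputable def binomPMF (n : ℕ) (p : ℝ) (k : ℕ) : ℝ :=
  (n.choose k : ℝ) * p ^ k * (1 - p) ^ (n - k)

/-- `P(X < Y)` for independent `X ~ Binomial(n, p)` and `Y ~ Binomial(n, q)`. -/
noncomputable def probLT (n : ℕ) (p q : ℝ) : ℝ :=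
  ∑ i ∈ Finset.range (n + 1), ∑ j ∈ Finset.range (n + 1),
    if i < j then binomPMF n p i * binomPMF n q j else 0

/-- `P(X = Y)` for independent `X ~ Binomial(n, p)` and `Y ~ Binomial(n, q)`. -/
noncomputable def probEQ (n : ℕ) (p q : ℝ) : ℝ :=
  ∑ i ∈ Finset.range (n + 1), binomPMF n p i * binomPMF n q i

/-- `P(X > Y)` for independent `X ~ Binomial(n, p)` and `Y ~ Binomial(n, q)`. -/
noncomputable def probGT (n : ℕ) (p q : ℝ) : ℝ :=
  ∑ i ∈ Finset.range (n + 1), ∑ j ∈ Finset.range (n + 1),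
    if j < i then binomPMF n p i * binomPMF n q j else 0

/-- Tie-adjusted rollout error probability `e(m, μ1, μ0)` of the empirical success
rule, for a matched-pairs experiment of even size `m` with `n = m/2` observations
per arm. -/
noncomputable def errProb (m : ℕ) (μ1 μ0 : ℝ) : ℝ :=
  if μ0 < μ1 then probLT (m / 2) μ1 μ0 + (1 / 2) * probEQ (m / 2) μ1 μ0
  else if μ1 = μ0 then 1 / 2
  else probGT (m / 2) μ1 μ0 + (1 / 2) * probEQ (m / 2) μ1 μ0

/-- The marginal cost–benefit ratio `η(m, μ1, μ0)` for population size `N`. -/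
noncomputable def eta (N m : ℕ) (μ1 μ0 : ℝ) : ℝ :=
  ((N : ℝ) - (m : ℝ)) * errProb m μ1 μ0 - ((N : ℝ) - (m : ℝ) - 2) * errProb (m + 2) μ1 μ0

lemma binomPMF_nonneg {n : ℕ} {p : ℝ} (hp0 : 0 ≤ p) (hp1 : p ≤ 1) (k : ℕ) :
    0 ≤ binomPMF n p k := by
  have h : (0:ℝ) ≤ 1 - p := by linarith
  unfold binomPMF
  positivity

lemma exp_le_quad {x : ℝ} (hx : |x| ≤ 1) : Real.exp x ≤ 1 + x + (3/4) * x ^ 2 := by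
  have h := Real.exp_bound hx (by norm_num : 0 < 2)
  have h2 : Real.exp x - ∑ m ∈ Finset.range 2, x ^ m / (m.factorial : ℝ) ≤
      |x| ^ 2 * ((2+1 : ℕ) / ((2:ℕ).factorial * 2)) := le_trans (le_abs_self _) h
  simp [Finset.sum_range_succ, Nat.factorial] at h2
  have : |x| ^ 2 = x ^ 2 := sq_abs x
  nlinarith [sq_abs x]

lemma bernoulli_mgf {p s : ℝ} (hp0 : 0 ≤ p) (hp1 : p ≤ 1) (hs : |s| ≤ 1) :
    1 - p + p * Real.exp s ≤ Real.exp (p * s + s ^ 2 / 4) := by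
  have hs1 : -1 ≤ s := neg_le_of_abs_le hs
  have hs2 : s ≤ 1 := le_of_abs_le hs
  have habs1 : |(-(p * s))| ≤ 1 := by
    rw [abs_neg, abs_mul, abs_of_nonneg hp0]
    nlinarith [abs_nonneg s]
  have habs2 : |(1 - p) * s| ≤ 1 := by
    rw [abs_mul, abs_of_nonneg (by linarith : (0:ℝ) ≤ 1 - p)]
    nlinarith [abs_nonneg s]
  have h1 := exp_le_quad habs1
  have h2 := exp_le_quad habs2
  have key : (1 - p) * Real.exp (-(p * s)) + p * Real.exp ((1 - p) * s) ≤
      Real.exp (s ^ 2 / 4) := by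
    have h3 : (1 - p) * Real.exp (-(p * s)) + p * Real.exp ((1 - p) * s) ≤
        1 + (3/4) * (p * (1 - p)) * s ^ 2 := by nlinarith
    have h4 : 1 + (3/4) * (p * (1 - p)) * s ^ 2 ≤ 1 + s ^ 2 / 4 := by
      nlinarith [sq_nonneg (p - 1/2), sq_nonneg s]
    have h5 : 1 + s ^ 2 / 4 ≤ Real.exp (s ^ 2 / 4) := by
      linarith [Real.add_one_le_exp (s ^ 2 / 4)]
    linarith
  have e1 : Real.exp (p * s) * Real.exp (-(p * s)) = 1 := by
    rw [← Real.exp_add]; simp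
  have e2 : Real.exp (p * s) * Real.exp ((1 - p) * s) = Real.exp s := by
    rw [← Real.exp_add]; ring_nf
  have := mul_le_mul_of_nonneg_left key (Real.exp_pos (p * s)).le
  calc 1 - p + p * Real.exp s
      = Real.exp (p * s) * ((1 - p) * Real.exp (-(p * s)) + p * Real.exp ((1 - p) * s)) := by
        rw [mul_add, ← mul_assoc, ← mul_assoc, mul_comm (Real.exp (p*s)) (1-p),
          mul_comm (Real.exp (p*s)) p, mul_assoc, mul_assoc, e1, e2]; ring
    _ ≤ Real.exp (p * s) * Real.exp (s ^ 2 / 4) := this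
    _ = Real.exp (p * s + s ^ 2 / 4) := (Real.exp_add _ _).symm

lemma mgf_sum (n : ℕ) (p t : ℝ) :
    ∑ i ∈ Finset.range (n + 1), binomPMF n p i * Real.exp (t * i)
      = (1 - p + p * Real.exp t) ^ n := by
  rw [show (1 - p + p * Real.exp t) = (p * Real.exp t + (1 - p)) by ring,
    add_pow]
  apply Finset.sum_congr rfl
  intro k hk
  unfold binomPMF
  rw [mul_pow, ← Real.exp_nat_mul, mul_comm (k:ℝ) t]
  ring

lemma main_bound (n : ℕ) (p q : ℝ) (hp0 : 0 ≤ p) (hp1 : p ≤ 1)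
    (hq0 : 0 ≤ q) (hq1 : q ≤ 1) (hd : q ≤ p) :
    probLT n p q + (1/2) * probEQ n p q ≤ Real.exp (-(n : ℝ) * (p - q) ^ 2 / 2) := by
  set t := p - q with ht
  have ht0 : 0 ≤ t := by simp [ht]; linarith
  have ht1 : t ≤ 1 := by simp [ht]; linarith
  -- step 1: bound by the MGF double sum
  have step1 : probLT n p q + (1/2) * probEQ n p q ≤
      ∑ i ∈ Finset.range (n+1), ∑ j ∈ Finset.range (n+1),
        (binomPMF n p i * Real.exp (-t * i)) * (binomPMF n q j * Real.exp (t * j)) := by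
    have heq : (1/2) * probEQ n p q =
        ∑ i ∈ Finset.range (n+1), ∑ j ∈ Finset.range (n+1),
          if j = i then (1/2) * (binomPMF n p i * binomPMF n q j) else 0 := by
      rw [probEQ, Finset.mul_sum]
      apply Finset.sum_congr rfl
      intro i hi
      rw [Finset.sum_ite_eq' (Finset.range (n+1)) i
        (fun j => (1/2) * (binomPMF n p i * binomPMF n q j)), if_pos hi]
    rw [probLT, heq, ← Finset.sum_add_distrib]
    apply Finset.sum_le_sum
    intro i hi
    rw [← Finset.sum_add_distrib]
    apply Finset.sum_le_sum
    intro j hj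
    have hw : 0 ≤ binomPMF n p i * binomPMF n q j :=
      mul_nonneg (binomPMF_nonneg hp0 hp1 i) (binomPMF_nonneg hq0 hq1 j)
    have hrhs : (binomPMF n p i * Real.exp (-t * i)) * (binomPMF n q j * Real.exp (t * j))
        = (binomPMF n p i * binomPMF n q j) * Real.exp (t * j - t * i) := by
      rw [show t * (j:ℝ) - t * i = -t * i + t * j by ring, Real.exp_add]
      ring
    rw [hrhs]
    rcases lt_trichotomy i j with h | h | h
    · rw [if_pos h, if_neg (by omega)]
      have hij : (i:ℝ) ≤ j := by exact_mod_cast h.le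
      have : (1:ℝ) ≤ Real.exp (t * j - t * i) := by
        apply Real.one_le_exp; nlinarith
      nlinarith
    · subst h
      rw [if_neg (lt_irrefl i), if_pos rfl, sub_self, Real.exp_zero, mul_one]
      linarith
    · rw [if_neg (by omega), if_neg (by omega)]
      have := (Real.exp_pos (t * (j:ℝ) - t * i)).le
      nlinarith
  -- step 2: factor and evaluate
  have step2 : ∑ i ∈ Finset.range (n+1), ∑ j ∈ Finset.range (n+1),
        (binomPMF n p i * Real.exp (-t * i)) * (binomPMF n q j * Real.exp (t * j))
      = (1 - p + p * Real.exp (-t)) ^ n * (1 - q + q * Real.exp t) ^ n := by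
    rw [← Finset.sum_mul_sum, mgf_sum n p (-t), mgf_sum n q t]
  -- step 3: bound each factor
  have hb1 : (0:ℝ) ≤ 1 - p + p * Real.exp (-t) := by
    have := (Real.exp_pos (-t)).le
    nlinarith
  have habs : |(-t)| ≤ 1 := by rw [abs_neg, abs_of_nonneg ht0]; exact ht1
  have habs' : |t| ≤ 1 := by rw [abs_of_nonneg ht0]; exact ht1
  have f1 : (1 - p + p * Real.exp (-t)) ^ n ≤ Real.exp (p * (-t) + (-t) ^ 2 / 4) ^ n :=
    pow_le_pow_left₀ hb1 (bernoulli_mgf hp0 hp1 habs) n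
  have hb2 : (0:ℝ) ≤ 1 - q + q * Real.exp t := by
    have := (Real.exp_pos t).le
    nlinarith
  have f2 : (1 - q + q * Real.exp t) ^ n ≤ Real.exp (q * t + t ^ 2 / 4) ^ n :=
    pow_le_pow_left₀ hb2 (bernoulli_mgf hq0 hq1 habs') n
  have step3 : (1 - p + p * Real.exp (-t)) ^ n * (1 - q + q * Real.exp t) ^ n
      ≤ Real.exp (-(n : ℝ) * t ^ 2 / 2) := by
    calc (1 - p + p * Real.exp (-t)) ^ n * (1 - q + q * Real.exp t) ^ n
        ≤ Real.exp (p * (-t) + (-t) ^ 2 / 4) ^ n * Real.exp (q * t + t ^ 2 / 4) ^ n := by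
          apply mul_le_mul f1 f2 (pow_nonneg hb2 n) (pow_nonneg (Real.exp_pos _).le n)
      _ = Real.exp ((n:ℝ) * (p * (-t) + (-t) ^ 2 / 4) + (n:ℝ) * (q * t + t ^ 2 / 4)) := by
          rw [← Real.exp_nat_mul, ← Real.exp_nat_mul, ← Real.exp_add]
      _ ≤ Real.exp (-(n : ℝ) * t ^ 2 / 2) := by
          apply Real.exp_le_exp.mpr
          have : p * (-t) + q * t = -t^2 := by rw [ht]; ring
          nlinarith [this]
  calc probLT n p q + (1/2) * probEQ n p q ≤ _ := step1
    _ = _ := step2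
    _ ≤ _ := step3

lemma probGT_eq_probLT (n : ℕ) (p q : ℝ) : probGT n p q = probLT n q p := by
  rw [probGT, probLT, Finset.sum_comm]
  apply Finset.sum_congr rfl
  intro j _
  apply Finset.sum_congr rfl
  intro i _
  by_cases h : j < i
  · rw [if_pos h, if_pos h, mul_comm]
  · rw [if_neg h, if_neg h]

lemma probEQ_comm (n : ℕ) (p q : ℝ) : probEQ n p q = probEQ n q p := by
  unfold probEQ
  exact Finset.sum_congr rfl fun i _ => mul_comm _ _


/-- Hoeffding-type bound on the rollout error probability of the empirical success
rule: `e(m, μ1, μ0) ≤ exp(−m (μ1 − μ0)² / 4)`. -/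
theorem errProb_hoeffding_bound (m : ℕ) (hm : Even m) (h2 : 2 ≤ m)
    (μ1 μ0 : ℝ) (h1 : μ1 ∈ Set.Icc (0 : ℝ) 1) (h0 : μ0 ∈ Set.Icc (0 : ℝ) 1) :
    errProb m μ1 μ0 ≤ Real.exp (-(m : ℝ) * (μ1 - μ0) ^ 2 / 4) := by
  obtain ⟨h10, h11⟩ := h1
  obtain ⟨h00, h01⟩ := h0
  obtain ⟨k, hk⟩ := hm
  have hmk : m = 2 * k := by omega
  have hdiv : m / 2 = k := by omega
  have hcast : (m : ℝ) = 2 * (k : ℝ) := by exact_mod_cast congrArg Nat.cast hmk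
  have hexp : Real.exp (-(m : ℝ) * (μ1 - μ0) ^ 2 / 4)
      = Real.exp (-(k : ℝ) * (μ1 - μ0) ^ 2 / 2) := by
    rw [hcast]; ring_nf
  rw [errProb, hdiv, hexp]
  split_ifs with hlt heq
  · exact main_bound k μ1 μ0 h10 h11 h00 h01 hlt.le
  · have : (μ1 - μ0) ^ 2 = 0 := by rw [heq]; ring
    rw [this]
    norm_num
  · have hle : μ1 ≤ μ0 := le_of_not_gt hlt
    rw [probGT_eq_probLT, probEQ_comm]
    have := main_bound k μ0 μ1 h00 h01 h10 h11 hle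
    rwa [show (μ0 - μ1) ^ 2 = (μ1 - μ0) ^ 2 by ring] at this
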